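/- The following are equivalent for a class K of L-structures: (1) K is equationally Noetherian; (2) for every n, the K-radical congruences of T(x₁,…,xₙ) (intersections of families of members of Spec_K(T(x₁,…,xₙ))) satisfy the ascending chain condition, equivalently the Zariski closed subsets of Spec_K(T(x₁,…,xₙ)) satisfy the descending chain condition; (3) for every n, the closed sets of the Zariski topology on Spec_K(T(x₁,…,xₙ)) satisfy the descending chain condition. -/

import Mathlib

open FirstOrder FirstOrder.Language Topology

universe u v w x y

/-- A congruence on an `L`-structure `A`, viewed as a set of pairs: an equivalence
relation respected by the interpretation of every function symbol. -/
def IsCong (L : FirstOrder.Language.{v, w}) (A : Type*) [L.Structure A]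
    (θ : Set (A × A)) : Prop :=
  (∀ a : A, (a, a) ∈ θ) ∧
  (∀ a b : A, (a, b) ∈ θ → (b, a) ∈ θ) ∧
  (∀ a b c : A, (a, b) ∈ θ → (b, c) ∈ θ → (a, c) ∈ θ) ∧
  ∀ (n : ℕ) (f : L.Functions n) (y z : Fin n → A),
    (∀ i, (y i, z i) ∈ θ) →
      (Structure.funMap f y, Structure.funMap f z) ∈ θ

/-- The setoid associated to a congruence. -/
def congSetoid {L : FirstOrder.Language.{v, w}} {A : Type*} [L.Structure A]
    (θ : Set (A × A)) (hθ : IsCong L A θ) : Setoid A :=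
  ⟨fun a b => (a, b) ∈ θ,
    ⟨fun a => hθ.1 a, fun h => hθ.2.1 _ _ h, fun h h' => hθ.2.2.1 _ _ _ h h'⟩⟩

/-- The natural `L`-structure on the quotient `A/θ` of `A` by a congruence `θ`. -/
noncomputable instance congQuotStructure {L : FirstOrder.Language.{v, w}} [L.IsAlgebraic]
    {A : Type*} [L.Structure A] {θ : Set (A × A)} {hθ : IsCong L A θ} :
    L.Structure (Quotient (congSetoid θ hθ)) where
  funMap {_} f q := Quotient.mk (congSetoid θ hθ)
    (Structure.funMap f fun i => (q i).out)
  RelMap {_} r _ := isEmptyElim r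

/-- The kernel of a map, as a set of pairs. -/
def mapKer {A : Type*} {B : Type*} (h : A → B) : Set (A × A) :=
  {p : A × A | h p.1 = h p.2}

/-- The preimage of a set of pairs under a map. -/
def pairPreimage {A : Type*} {B : Type*} (h : A → B) (θ : Set (B × B)) : Set (A × A) :=
  {p : A × A | (h p.1, h p.2) ∈ θ}

/-- The pushforward `ψ/θ = {(a/θ, a'/θ) : (a, a') ∈ ψ}` of a set of pairs to the
quotient by the congruence `θ`. -/
def quotPush {L : FirstOrder.Language.{v, w}} {A : Type*} [L.Structure A]
    (θ : Set (A × A)) (hθ : IsCong L A θ) (ψ : Set (A × A)) :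
    Set (Quotient (congSetoid θ hθ) × Quotient (congSetoid θ hθ)) :=
  {p | ∃ a a' : A, Quotient.mk (congSetoid θ hθ) a = p.1 ∧
        Quotient.mk (congSetoid θ hθ) a' = p.2 ∧ (a, a') ∈ ψ}

/-- The `K`-spectrum of `A`: the set of kernels of homomorphisms from `A` into
members of the class `K` (equivalently, the set of congruences `θ` on `A` such that
`A/θ` embeds into a member of `K`). -/
def SpecK {L : FirstOrder.Language.{v, w}} (K : ∀ B : Type u, L.Structure B → Prop)
    (A : Type*) [L.Structure A] : Set (Set (A × A)) :=
  {θ | ∃ (B : Type u) (iB : L.Structure B), K B iB ∧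
        ∃ h : @Language.Hom L A B _ iB, θ = mapKer h.toFun}

/-- The diagonal congruence on `A`. -/
def diagCong (A : Type*) : Set (A × A) := {p : A × A | p.1 = p.2}

/-- `A` is `K`-reduced: the intersection of all congruences in `Spec_K A` is the diagonal. -/
def IsKReduced {L : FirstOrder.Language.{v, w}} (K : ∀ B : Type u, L.Structure B → Prop)
    (A : Type*) [L.Structure A] : Prop :=
  ⋂₀ SpecK K A = diagCong A

/-- A `K`-radical congruence: an intersection of a (possibly empty) family of members
of `Spec_K A` (the empty intersection being `A × A`). -/
def IsKRadical {L : FirstOrder.Language.{v, w}} (K : ∀ B : Type u, L.Structure B → Prop)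
    (A : Type*) [L.Structure A] (θ : Set (A × A)) : Prop :=
  ∃ F : Set (Set (A × A)), F ⊆ SpecK K A ∧ θ = ⋂₀ F

/-- The Zariski closed subset of the `K`-spectrum determined by `S ⊆ A × A`. -/
def VClosed {L : FirstOrder.Language.{v, w}} (K : ∀ B : Type u, L.Structure B → Prop)
    (A : Type*) [L.Structure A] (S : Set (A × A)) : Set (Set (A × A)) :=
  {θ ∈ SpecK K A | S ⊆ θ}

/-- The `K`-radical of a set of pairs `S`. -/
def radK {L : FirstOrder.Language.{v, w}} (K : ∀ B : Type u, L.Structure B → Prop)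
    (A : Type*) [L.Structure A] (S : Set (A × A)) : Set (A × A) :=
  ⋂₀ VClosed K A S

/-- The Zariski closed subset of the `K`-spectrum (as a subtype) determined by `S`. -/
def VZar {L : FirstOrder.Language.{v, w}} (K : ∀ B : Type u, L.Structure B → Prop)
    (A : Type*) [L.Structure A] (S : Set (A × A)) : Set {θ // θ ∈ SpecK K A} :=
  {θ | S ⊆ (θ : Set (A × A))}

/-- The Zariski topology on the `K`-spectrum of `A`: the closed sets are the arbitrary
intersections of finite unions of Zariski closed sets `VZar K A S`. -/
def zariskiTopology {L : FirstOrder.Language.{v, w}} (K : ∀ B : Type u, L.Structure B → Prop)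
    (A : Type*) [L.Structure A] : TopologicalSpace {θ // θ ∈ SpecK K A} :=
  TopologicalSpace.generateFrom {U | ∃ S : Set (A × A), U = (VZar K A S)ᶜ}

/-- A product structure on a dependent function type. -/
instance piStructure {L : FirstOrder.Language.{v, w}} [L.IsAlgebraic]
    {ι : Type*} {B : ι → Type*} [∀ i, L.Structure (B i)] :
    L.Structure (∀ i, B i) where
  funMap {_} f q i := Structure.funMap f fun j => q j i
  RelMap {_} r _ := isEmptyElim r

/-- `A` embeds into a direct product of a (possibly empty) family of members of `K`. -/
def EmbedsInProduct {L : FirstOrder.Language.{v, w}} [L.IsAlgebraic]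
    (K : ∀ B : Type u, L.Structure B → Prop) (A : Type*) [L.Structure A] : Prop :=
  ∃ (ι : Type u) (B : ι → Type u) (iB : ∀ i, L.Structure (B i)),
    (∀ i, K (B i) (iB i)) ∧
      Nonempty (@Language.Embedding L A (∀ i, B i) _ (@piStructure L _ ι B iB))

/-- The term-algebra structure on `L.Term α`. -/
instance termStructure {L : FirstOrder.Language.{v, w}} [L.IsAlgebraic] {α : Type x} :
    L.Structure (L.Term α) where
  funMap {_} f q := Term.func f q
  RelMap {_} r _ := isEmptyElim r

/-- Evaluation of a term at an assignment `a : X → A`, for an explicitly given structure. -/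
def evalAt {L : FirstOrder.Language.{v, w}} {A : Type*} (iA : L.Structure A)
    {X : Type x} (a : X → A) : L.Term X → A :=
  letI := iA; fun t => Term.realize a t

/-- An equation (pair of terms) holds at an assignment `a`. -/
def EqHolds {L : FirstOrder.Language.{v, w}} {A : Type*} (iA : L.Structure A)
    {X : Type x} (a : X → A) (pq : L.Term X × L.Term X) : Prop :=
  evalAt iA a pq.1 = evalAt iA a pq.2

/-- `K` is equationally Noetherian. -/
def EqNoetherian {L : FirstOrder.Language.{v, w}}
    (K : ∀ B : Type u, L.Structure B → Prop) : Prop :=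
  ∀ (n : ℕ) (T : Set (L.Term (Fin n) × L.Term (Fin n))),
    ∃ T₀ ⊆ T, T₀.Finite ∧
      ∀ (A : Type u) (iA : L.Structure A), K A iA → ∀ a : Fin n → A,
        (∀ pq ∈ T₀, EqHolds iA a pq) → ∀ pq ∈ T, EqHolds iA a pq

/-- `A` is discriminated by `K`: every finite subset is separated injectively by a
homomorphism into a member of `K`. -/
def DiscriminatedBy {L : FirstOrder.Language.{v, w}}
    (K : ∀ B : Type u, L.Structure B → Prop) (A : Type*) [iA : L.Structure A] : Prop :=
  ∀ W : Set A, W.Finite → ∃ (B : Type u) (iB : L.Structure B), K B iB ∧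
    ∃ h : @Language.Hom L A B _ iB, Set.InjOn h.toFun W

/-- `A` is `n`-separated by `K` for every `n`. -/
def NSeparatedBy {L : FirstOrder.Language.{v, w}}
    (K : ∀ B : Type u, L.Structure B → Prop) (A : Type*) [iA : L.Structure A] : Prop :=
  ∀ (n : ℕ) (a b : Fin n → A), (∀ i, a i ≠ b i) →
    ∃ (B : Type u) (iB : L.Structure B), K B iB ∧
      ∃ h : @Language.Hom L A B _ iB, ∀ i, h.toFun (a i) ≠ h.toFun (b i)

/-- Any member of the `K`-spectrum is a congruence. -/
theorem isCong_of_mem_specK {L : FirstOrder.Language.{v, w}}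
    {K : ∀ B : Type u, L.Structure B → Prop} {A : Type*} [L.Structure A]
    {θ : Set (A × A)} (hθ : θ ∈ SpecK K A) : IsCong L A θ := by
  obtain ⟨B, iB, -, h, rfl⟩ := hθ
  refine ⟨fun a => rfl, fun a b hab => hab.symm, fun a b c hab hbc => hab.trans hbc,
    fun n f y z hyz => ?_⟩
  show h.toFun _ = h.toFun _
  have hy := @Language.Hom.map_fun' L A B _ iB h n f y
  have hz := @Language.Hom.map_fun' L A B _ iB h n f z
  rw [hy, hz]
  exact congrArg _ (funext fun i => hyz i)

/-- An arbitrary intersection of congruences is a congruence. -/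
theorem isCong_sInter {L : FirstOrder.Language.{v, w}} {A : Type*} [L.Structure A]
    {X : Set (Set (A × A))} (hX : ∀ θ ∈ X, IsCong L A θ) : IsCong L A (⋂₀ X) :=
  ⟨fun a θ hθ => (hX θ hθ).1 a,
   fun a b hab θ hθ => (hX θ hθ).2.1 a b (hab θ hθ),
   fun a b c hab hbc θ hθ => (hX θ hθ).2.2.1 a b c (hab θ hθ) (hbc θ hθ),
   fun n f y z hyz θ hθ => (hX θ hθ).2.2.2 n f y z (fun i => hyz i θ hθ)⟩

/-! The pivot is finite generation of radicals: every set `T` of equations has the same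
`K`-radical as a finite `T₀ ⊆ T`. Over the term algebra a pair lies in `radK K _ T₀` exactly
when it holds in members of `K` wherever `T₀` does, so finite generation in every arity is
equational Noetherianity. Finite generation makes the Zariski topology Noetherian by
Alexander's subbasis theorem, giving the D.C.C. on closed sets, in particular on the basic
closed sets `V(S)`; since a radical `θ` is recovered as `⋂ V(θ)`, this is the A.C.C. on
radicals; and the A.C.C. gives back finite generation, by taking the radical of a finite
`T₀ ⊆ T` that is maximal among such. -/

section ChainConditions
variable {α : Type*}

def AscendingChainCondition (p : Set α → Prop) : Prop :=
  ∀ c : ℕ → Set α, (∀ m, p (c m)) → (∀ m, c m ⊆ c (m + 1)) → ∃ N, ∀ m, N ≤ m → c m = c N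

def DescendingChainCondition (p : Set α → Prop) : Prop :=
  ∀ c : ℕ → Set α, (∀ m, p (c m)) → (∀ m, c (m + 1) ⊆ c m) → ∃ N, ∀ m, N ≤ m → c m = c N

theorem AscendingChainCondition.wellFoundedGT {p : Set α → Prop}
    (h : AscendingChainCondition p) : WellFoundedGT {s // p s} := by
  rw [wellFoundedGT_iff_monotone_chain_condition]
  intro a
  obtain ⟨N, hN⟩ := h (fun m => (a m).1) (fun m => (a m).2) (fun m => a.mono m.le_succ)
  exact ⟨N, fun m hm => Subtype.ext (hN m hm).symm⟩

theorem TopologicalSpace.NoetherianSpace.descendingChainCondition_isClosed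
    [TopologicalSpace α] [TopologicalSpace.NoetherianSpace α] :
    DescendingChainCondition (IsClosed : Set α → Prop) := by
  intro c hc hd
  obtain ⟨N, hN⟩ := WellFoundedLT.antitone_chain_condition
    (f := fun m => (⟨c m, hc m⟩ : TopologicalSpace.Closeds α)) (antitone_nat_of_succ_le hd)
  exact ⟨N, fun m hm => congrArg SetLike.coe (hN m hm).symm⟩

end ChainConditions

section Radical
variable {L : FirstOrder.Language.{v, w}} (K : ∀ B : Type u, L.Structure B → Prop)
  (A : Type*) [L.Structure A]

def RadKFinitelyGenerated : Prop :=
  ∀ T : Set (A × A), ∃ T₀ ⊆ T, T₀.Finite ∧ T ⊆ radK K A T₀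

variable {K A}

theorem mem_of_mem_radK {S θ : Set (A × A)} {p : A × A} (hp : p ∈ radK K A S)
    (hθ : θ ∈ SpecK K A) (hSθ : S ⊆ θ) : p ∈ θ :=
  Set.mem_sInter.1 hp θ ⟨hθ, hSθ⟩

theorem subset_radK (S : Set (A × A)) : S ⊆ radK K A S :=
  fun _ hp => Set.mem_sInter.2 fun _ hθ => hθ.2 hp

theorem radK_mono {S S' : Set (A × A)} (h : S ⊆ S') : radK K A S ⊆ radK K A S' :=
  fun _ hp _ hθ => mem_of_mem_radK hp hθ.1 (h.trans hθ.2)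

theorem isKRadical_radK (S : Set (A × A)) : IsKRadical K A (radK K A S) :=
  ⟨VClosed K A S, fun _ hθ => hθ.1, rfl⟩

theorem IsKRadical.radK_eq {θ : Set (A × A)} (hθ : IsKRadical K A θ) : radK K A θ = θ := by
  obtain ⟨F, hF, rfl⟩ := hθ
  exact (Set.subset_sInter fun ψ hψ _ hp => mem_of_mem_radK hp (hF hψ)
    (Set.sInter_subset_of_mem hψ)).antisymm (subset_radK _)

theorem vClosed_anti {S S' : Set (A × A)} (h : S ⊆ S') : VClosed K A S' ⊆ VClosed K A S :=
  fun _ hθ => ⟨hθ.1, h.trans hθ.2⟩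

theorem image_val_vZar (S : Set (A × A)) : Subtype.val '' VZar K A S = VClosed K A S := by
  ext θ
  exact ⟨fun ⟨ψ, hψ, hψθ⟩ => hψθ ▸ ⟨ψ.2, hψ⟩, fun hθ => ⟨⟨θ, hθ.1⟩, hθ.2, rfl⟩⟩

theorem isClosed_vZar (S : Set (A × A)) : IsClosed[zariskiTopology K A] (VZar K A S) := by
  let := zariskiTopology K A
  exact isOpen_compl_iff.1 (.basic _ ⟨S, rfl⟩)

theorem RadKFinitelyGenerated.of_wellFoundedGT [WellFoundedGT {θ // IsKRadical K A θ}] :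
    RadKFinitelyGenerated K A := by
  intro T
  obtain ⟨θ, ⟨T₀, hT₀T, hT₀, hθ⟩, hmax⟩ := wellFounded_gt.has_min
    {θ : {θ // IsKRadical K A θ} | ∃ T₀ ⊆ T, T₀.Finite ∧ θ.1 = radK K A T₀}
    ⟨⟨_, isKRadical_radK ∅⟩, ∅, Set.empty_subset T, Set.finite_empty, rfl⟩
  refine ⟨T₀, hT₀T, hT₀, fun p hp => ?_⟩
  have hins : radK K A (insert p T₀) = radK K A T₀ := by
    by_contra hne
    exact hmax ⟨_, isKRadical_radK _⟩ ⟨_, Set.insert_subset hp hT₀T, hT₀.insert p, rfl⟩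
      (show θ.1 ⊂ _ from hθ ▸ (radK_mono (Set.subset_insert p T₀)).ssubset_of_ne (Ne.symm hne))
  exact hins ▸ subset_radK _ (Set.mem_insert p T₀)

end Radical

section Zariski
variable {L : FirstOrder.Language.{v, w}} {K : ∀ B : Type u, L.Structure B → Prop}
  {A : Type*} [L.Structure A]

/- By Alexander's subbasis theorem it suffices to refine covers by subbasic opens
`(VZar K A S)ᶜ`; a finite `T₀` generating the radical of the union of the `S`'s picks out
finitely many of them, one `S` per pair in `T₀`. -/
theorem RadKFinitelyGenerated.noetherianSpace (h : RadKFinitelyGenerated K A) :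
    @TopologicalSpace.NoetherianSpace _ (zariskiTopology K A) := by
  let := zariskiTopology K A
  refine TopologicalSpace.noetherianSpace_iff_isCompact.2 fun s =>
    isCompact_generateFrom rfl fun P hP hs => ?_
  obtain ⟨T₀, hT₀, hT₀fin, hT⟩ := h (⋃₀ {S | (VZar K A S)ᶜ ∈ P})
  choose! S hSP hpS using fun p (hp : p ∈ T₀) => Set.mem_sUnion.1 (hT₀ hp)
  refine ⟨(fun p => (VZar K A (S p))ᶜ) '' T₀, ?_, hT₀fin.image _, fun θ hθ => ?_⟩
  · rintro _ ⟨p, hp, rfl⟩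
    exact hSP p hp
  obtain ⟨_, hUP, hθU⟩ := hs hθ
  obtain ⟨S', rfl⟩ := hP hUP
  obtain ⟨q, hqS', hqθ⟩ := Set.not_subset.1 hθU
  obtain ⟨p, hp, hpθ⟩ : ∃ p ∈ T₀, p ∉ θ.1 := by
    by_contra! hT₀θ
    exact hqθ (mem_of_mem_radK (hT (Set.mem_sUnion.2 ⟨S', hUP, hqS'⟩)) θ.2 hT₀θ)
  exact ⟨_, ⟨p, hp, rfl⟩, fun hθS => hpθ (hθS (hpS p hp))⟩

theorem descendingChainCondition_vClosed_of_isClosed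
    (h : DescendingChainCondition fun C => IsClosed[zariskiTopology K A] C) :
    DescendingChainCondition fun C => ∃ S, C = VClosed K A S := by
  intro c hc hd
  choose S hS using hc
  simp only [hS, ← image_val_vZar, Set.image_subset_image_iff Subtype.val_injective] at hd ⊢
  obtain ⟨N, hN⟩ := h _ (fun m => isClosed_vZar (S m)) hd
  exact ⟨N, fun m hm => congrArg _ (hN m hm)⟩

theorem ascendingChainCondition_isKRadical_of_vClosed
    (h : DescendingChainCondition fun C => ∃ S, C = VClosed K A S) :
    AscendingChainCondition (IsKRadical K A) := by
  intro c hc hd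
  obtain ⟨N, hN⟩ := h (fun m => VClosed K A (c m)) (fun m => ⟨_, rfl⟩)
    (fun m => vClosed_anti (hd m))
  refine ⟨N, fun m hm => ?_⟩
  rw [← (hc m).radK_eq, ← (hc N).radK_eq]
  exact congrArg Set.sInter (hN m hm)

end Zariski

section TermAlgebra
variable {L : FirstOrder.Language.{v, w}} [L.IsAlgebraic] {X : Type x}

theorem realize_var_eq_self (t : L.Term X) : t.realize Term.var = t := by
  induction t with
  | var => rfl
  | func f ts ih => exact congrArg (Term.func f) (funext ih)

def evalHom {B : Type*} (iB : L.Structure B) (a : X → B) :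
    @Language.Hom L (L.Term X) B termStructure iB :=
  @Language.Hom.mk L (L.Term X) B termStructure iB (evalAt iB a) (fun _ _ => rfl)
    (fun r => isEmptyElim r)

theorem hom_apply_eq_evalAt {B : Type*} {iB : L.Structure B}
    (h : @Language.Hom L (L.Term X) B termStructure iB) (t : L.Term X) :
    h t = evalAt iB (fun i => h (Term.var i)) t := by
  let := iB
  conv_lhs => rw [← realize_var_eq_self t]
  exact (HomClass.realize_term h).symm

theorem subset_radK_term_iff (K : ∀ B : Type u, L.Structure B → Prop)
    (T₀ T : Set (L.Term X × L.Term X)) :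
    T ⊆ radK K (L.Term X) T₀ ↔ ∀ (B : Type u) (iB : L.Structure B), K B iB → ∀ a : X → B,
      (∀ pq ∈ T₀, EqHolds iB a pq) → ∀ pq ∈ T, EqHolds iB a pq := by
  constructor
  · intro hT B iB hB a hT₀ pq hpq
    exact mem_of_mem_radK (hT hpq) ⟨B, iB, hB, evalHom iB a, rfl⟩ hT₀
  · rintro hT pq hpq θ ⟨⟨B, iB, hB, h, rfl⟩, hT₀θ⟩
    have hEq : ∀ pq, pq ∈ mapKer h.toFun ↔ EqHolds iB (fun i => h (Term.var i)) pq :=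
      fun pq => by simp only [mapKer, EqHolds, ← hom_apply_eq_evalAt]; rfl
    exact (hEq pq).2 (hT B iB hB _ (fun pq hpq => (hEq pq).1 (hT₀θ hpq)) pq hpq)

theorem eqNoetherian_iff (K : ∀ B : Type u, L.Structure B → Prop) :
    EqNoetherian K ↔ ∀ n, RadKFinitelyGenerated K (L.Term (Fin n)) := by
  simp only [EqNoetherian, RadKFinitelyGenerated, subset_radK_term_iff]

end TermAlgebra

/-- `K` is equationally Noetherian iff for every `n` the `K`-radical
congruences of the term algebra satisfy the A.C.C. (equivalently the Zariski closed
subsets of its spectrum satisfy the D.C.C.) iff for every `n` the closed sets of the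
Zariski topology on the spectrum satisfy the D.C.C. -/
theorem statement14 {L : FirstOrder.Language.{v, w}} [L.IsAlgebraic]
    (K : ∀ B : Type u, L.Structure B → Prop) :
    [EqNoetherian K,
      ∀ (n : ℕ) (c : ℕ → Set (L.Term (Fin n) × L.Term (Fin n))),
        (∀ m, IsKRadical K (L.Term (Fin n)) (c m)) → (∀ m, c m ⊆ c (m + 1)) →
          ∃ N, ∀ m, N ≤ m → c m = c N,
      ∀ (n : ℕ) (c : ℕ → Set (Set (L.Term (Fin n) × L.Term (Fin n)))),
        (∀ m, ∃ S, c m = VClosed K (L.Term (Fin n)) S) → (∀ m, c (m + 1) ⊆ c m) →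
          ∃ N, ∀ m, N ≤ m → c m = c N,
      ∀ (n : ℕ) (c : ℕ → Set {θ // θ ∈ SpecK K (L.Term (Fin n))}),
        (∀ m, IsClosed[zariskiTopology K (L.Term (Fin n))] (c m)) →
          (∀ m, c (m + 1) ⊆ c m) → ∃ N, ∀ m, N ≤ m → c m = c N].TFAE := by
  tfae_have 1 → 4 := fun h n => by
    let := zariskiTopology K (L.Term (Fin n))
    have := ((eqNoetherian_iff K).1 h n).noetherianSpace
    exact TopologicalSpace.NoetherianSpace.descendingChainCondition_isClosed
  tfae_have 4 → 3 := fun h n => descendingChainCondition_vClosed_of_isClosed (h n)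
  tfae_have 3 → 2 := fun h n => ascendingChainCondition_isKRadical_of_vClosed (h n)
  tfae_have 2 → 1 := fun h => (eqNoetherian_iff K).2 fun n =>
    have := AscendingChainCondition.wellFoundedGT (h n)
    .of_wellFoundedGT
  tfae_finish
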